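/- arXiv:1604.04862 — 7 statements merged into one kernel-verified Lean document; each statement's English description precedes it below -/
import Mathlib

section
/- Let n ≥ 1 and let (a_ij) be a real symmetric n×n matrix with vanishing trace, i.e. ∑_{i=1}^n a_ii = 0. Then for all real numbers x_1,…,x_n one has ∑_{i,j=1}^n a_ij x_i x_j ≥ −√((n−1)/n) · (∑_{i,j=1}^n a_ij²)^{1/2} · ∑_{i=1}^n x_i². -/
/-- **Lemma 4.1.** For a real symmetric `n × n` matrix `A` with vanishing trace,
the quadratic form satisfies
`∑ i j, A i j * x i * x j ≥ -√((n-1)/n) * (∑ i j, (A i j)^2)^(1/2) * ∑ i, (x i)^2`. -/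
theorem stmt_0 (n : ℕ) (hn : 1 ≤ n) (A : Matrix (Fin n) (Fin n) ℝ)
    (hsymm : ∀ i j, A i j = A j i) (htrace : ∑ i, A i i = 0) (x : Fin n → ℝ) :
    ∑ i, ∑ j, A i j * x i * x j ≥
      -Real.sqrt (((n : ℝ) - 1) / n) * Real.sqrt (∑ i, ∑ j, (A i j) ^ 2) *
        ∑ i, (x i) ^ 2 := by
  have hn0 : (0:ℝ) < n := by exact_mod_cast hn
  set s : ℝ := ∑ i, (x i) ^ 2 with hs_def
  have hs : 0 ≤ s := Finset.sum_nonneg fun i _ => sq_nonneg _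
  -- the "test matrix" B = x xᵀ - (s/n) I, viewed on the product type
  set f : Fin n × Fin n → ℝ := fun p => A p.1 p.2 with hf_def
  set g : Fin n × Fin n → ℝ :=
    fun p => x p.1 * x p.2 - (if p.1 = p.2 then s / n else 0) with hg_def
  -- the quadratic form equals ⟨A, B⟩ since tr A = 0
  have h1 : ∑ i, ∑ j, A i j * x i * x j = ∑ p : Fin n × Fin n, f p * g p := by
    rw [Fintype.sum_prod_type]
    have : ∀ i j : Fin n, f (i, j) * g (i, j) =
        A i j * x i * x j - (if i = j then A i j * (s / n) else 0) := by
      intro i j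
      simp only [hf_def, hg_def]
      split_ifs <;> ring
    simp only [this, Finset.sum_sub_distrib, Finset.sum_ite_eq, Finset.mem_univ, if_true]
    rw [← Finset.sum_mul, htrace]
    ring
  -- ∑ f² is the Frobenius norm squared
  have h2 : ∑ p : Fin n × Fin n, (f p) ^ 2 = ∑ i, ∑ j, (A i j) ^ 2 := by
    rw [Fintype.sum_prod_type]
  -- ∑ g² = s² (n-1)/n
  have h3 : ∑ p : Fin n × Fin n, (g p) ^ 2 = s ^ 2 * (((n:ℝ) - 1) / n) := by
    rw [Fintype.sum_prod_type]
    have : ∀ i j : Fin n, (g (i, j)) ^ 2 =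
        (x i)^2 * (x j)^2 - (if i = j then 2 * (x i * x j) * (s / n) else 0)
          + (if i = j then (s/n)^2 else 0) := by
      intro i j
      simp only [hg_def]
      split_ifs with h
      · subst h; ring
      · ring
    simp only [this, Finset.sum_add_distrib, Finset.sum_sub_distrib,
      Finset.sum_ite_eq, Finset.mem_univ, if_true, Finset.sum_const,
      Finset.card_univ, Fintype.card_fin, nsmul_eq_mul]
    rw [← Finset.sum_mul]
    have e1 : ∑ i : Fin n, 2 * (x i * x i) = 2 * s := by
      rw [hs_def, Finset.mul_sum]
      exact Finset.sum_congr rfl fun i _ => by ring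
    have e2 : ∑ i : Fin n, ∑ j : Fin n, (x i) ^ 2 * (x j) ^ 2 = s * s := by
      simp_rw [← Finset.mul_sum]
      rw [← Finset.sum_mul, ← hs_def]
    rw [e1, e2]
    field_simp
    ring
  have key : ∑ p : Fin n × Fin n, (-f p) * g p ≤
      Real.sqrt (∑ p : Fin n × Fin n, (-f p) ^ 2) *
        Real.sqrt (∑ p : Fin n × Fin n, (g p) ^ 2) :=
    Real.sum_mul_le_sqrt_mul_sqrt _ _ _
  have hnegf : ∑ p : Fin n × Fin n, (-f p) ^ 2 = ∑ p : Fin n × Fin n, (f p) ^ 2 := by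
    simp [neg_pow]
  have hsum : ∑ p : Fin n × Fin n, (-f p) * g p = -(∑ p : Fin n × Fin n, f p * g p) := by
    simp [neg_mul]
  rw [hsum, hnegf, h2, h3] at key
  have hsqrt : Real.sqrt (s ^ 2 * (((n:ℝ) - 1) / n)) =
      s * Real.sqrt (((n:ℝ) - 1) / n) := by
    rw [Real.sqrt_mul (sq_nonneg s), Real.sqrt_sq hs]
  rw [hsqrt] at key
  rw [ge_iff_le, h1]
  nlinarith [key]
end

section
/- Let n ≥ 1, let V be a real inner product space, let (a_ij) be a real symmetric n×n matrix with vanishing trace ∑_{i=1}^n a_ii = 0, and let v_1,…,v_n ∈ V. Then ∑_{i,j=1}^n a_ij ⟨v_i, v_j⟩ ≥ −√((n−1)/n) · ‖a‖_F · ∑_{i=1}^n ‖v_i‖². -/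
/-!
Let `G` be the Gram matrix of the `v i`. Since `tr a = 0`, pairing `a` with `G` is the same as
pairing it with the trace-free part `G - (tr G / n) • 1`, so by Cauchy–Schwarz the sum is bounded by
`‖a‖_F * ‖G - (tr G / n) • 1‖_F`. Moreover `‖G - (tr G / n) • 1‖_F² = ‖G‖_F² - (tr G)² / n`, and
`‖G‖_F ≤ tr G = ∑ i, ‖v i‖²` by Cauchy–Schwarz in `V`, which gives the factor `(n - 1) / n`.
-/

open Finset Matrix
open scoped InnerProductSpace

namespace Matrix

section Trace

variable {ι : Type*} [Fintype ι]

theorem abs_sum_sum_mul_le_sqrt_mul_sqrt (a b : Matrix ι ι ℝ) :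
    |∑ i, ∑ j, a i j * b i j| ≤ √(∑ i, ∑ j, a i j ^ 2) * √(∑ i, ∑ j, b i j ^ 2) := by
  rw [← Real.sqrt_mul (by positivity)]
  apply Real.abs_le_sqrt
  simpa only [Fintype.sum_prod_type] using
    sum_mul_sq_le_sq_mul_sq univ (fun p : ι × ι ↦ a p.1 p.2) (fun p ↦ b p.1 p.2)

variable [DecidableEq ι]

theorem sum_sum_mul_sub_smul_one_of_trace_eq_zero {a : Matrix ι ι ℝ} (ha : a.trace = 0)
    (b : Matrix ι ι ℝ) (c : ℝ) :
    ∑ i, ∑ j, a i j * (b - c • 1) i j = ∑ i, ∑ j, a i j * b i j := by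
  simp only [sub_apply, smul_apply, one_apply, mul_sub, sum_sub_distrib, smul_eq_mul, mul_ite,
    mul_one, mul_zero, sum_ite_eq, mem_univ, if_true]
  rw [← sum_mul, show ∑ i, a i i = a.trace from rfl, ha, zero_mul, sub_zero]

theorem sum_sum_sq_sub_trace_div_smul_one (b : Matrix ι ι ℝ) :
    ∑ i, ∑ j, ((b - (b.trace / Fintype.card ι) • 1) i j) ^ 2 =
      ∑ i, ∑ j, b i j ^ 2 - b.trace ^ 2 / Fintype.card ι := by
  rcases eq_or_ne (Fintype.card ι : ℝ) 0 with hn | hn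
  · simp [Fintype.card_eq_zero_iff.mp (by exact_mod_cast hn)]
  simp only [sub_apply, smul_apply, one_apply, smul_eq_mul, mul_ite, mul_one, mul_zero, sub_sq,
    sum_add_distrib, sum_sub_distrib]
  simp only [sum_ite_eq, mem_univ, if_true, ite_pow, ne_eq, OfNat.ofNat_ne_zero,
    not_false_eq_true, zero_pow, sum_const, card_univ, nsmul_eq_mul, ← sum_mul, ← mul_sum]
  rw [show ∑ i, b i i = b.trace from rfl]
  field_simp
  ring

end Trace

section Gram

variable {ι V : Type*} [Fintype ι] [NormedAddCommGroup V] [InnerProductSpace ℝ V]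

theorem trace_gram (v : ι → V) : (gram ℝ v).trace = ∑ i, ‖v i‖ ^ 2 := by
  simp [trace]

theorem sum_sum_sq_gram_le (v : ι → V) :
    ∑ i, ∑ j, gram ℝ v i j ^ 2 ≤ (∑ i, ‖v i‖ ^ 2) ^ 2 := by
  calc ∑ i, ∑ j, gram ℝ v i j ^ 2 ≤ ∑ i, ∑ j, ‖v i‖ ^ 2 * ‖v j‖ ^ 2 := by
        gcongr with i _ j _
        rw [gram_apply, ← mul_pow, ← sq_abs]
        gcongr
        exact abs_real_inner_le_norm _ _
    _ = (∑ i, ‖v i‖ ^ 2) ^ 2 := by simp_rw [sq (∑ i, _), sum_mul_sum]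

end Gram

section TraceFreeGram

variable {ι V : Type*} [Fintype ι] [DecidableEq ι] [NormedAddCommGroup V] [InnerProductSpace ℝ V]

theorem sum_sum_sq_gram_sub_smul_one_le [Nonempty ι] (v : ι → V) :
    ∑ i, ∑ j, ((gram ℝ v - ((∑ i, ‖v i‖ ^ 2) / Fintype.card ι) • 1) i j) ^ 2 ≤
      ((Fintype.card ι - 1) / Fintype.card ι) * (∑ i, ‖v i‖ ^ 2) ^ 2 := by
  have hn : (Fintype.card ι : ℝ) ≠ 0 := by positivity
  rw [← trace_gram, sum_sum_sq_sub_trace_div_smul_one, trace_gram]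
  have : ((Fintype.card ι : ℝ) - 1) / Fintype.card ι * (∑ i, ‖v i‖ ^ 2) ^ 2 =
      (∑ i, ‖v i‖ ^ 2) ^ 2 - (∑ i, ‖v i‖ ^ 2) ^ 2 / Fintype.card ι := by
    field_simp
  linarith [sum_sum_sq_gram_le v]

theorem abs_sum_sum_mul_inner_le_of_trace_eq_zero {a : Matrix ι ι ℝ} (ha : a.trace = 0)
    (v : ι → V) :
    |∑ i, ∑ j, a i j * ⟪v i, v j⟫_ℝ| ≤
      √((Fintype.card ι - 1) / Fintype.card ι) * √(∑ i, ∑ j, a i j ^ 2) * ∑ i, ‖v i‖ ^ 2 := by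
  cases isEmpty_or_nonempty ι
  · simp
  set t := ∑ i, ‖v i‖ ^ 2
  calc |∑ i, ∑ j, a i j * ⟪v i, v j⟫_ℝ|
      = |∑ i, ∑ j, a i j * (gram ℝ v - (t / Fintype.card ι) • 1) i j| := by
        rw [sum_sum_mul_sub_smul_one_of_trace_eq_zero ha]; rfl
    _ ≤ √(∑ i, ∑ j, a i j ^ 2) *
          √(∑ i, ∑ j, ((gram ℝ v - (t / Fintype.card ι) • 1) i j) ^ 2) :=
        abs_sum_sum_mul_le_sqrt_mul_sqrt _ _
    _ ≤ √(∑ i, ∑ j, a i j ^ 2) * √((Fintype.card ι - 1) / Fintype.card ι * t ^ 2) := by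
        gcongr
        exact sum_sum_sq_gram_sub_smul_one_le v
    _ = _ := by
        rw [Real.sqrt_mul' _ (sq_nonneg t), Real.sqrt_sq (by positivity)]
        ring

end TraceFreeGram

end Matrix

theorem stmt_1_general (n : ℕ) (V : Type*) [NormedAddCommGroup V]
    [InnerProductSpace ℝ V] (a : Matrix (Fin n) (Fin n) ℝ)
    (htrace : ∑ i, a i i = 0) (v : Fin n → V) :
    ∑ i, ∑ j, a i j * (inner ℝ (v i) (v j) : ℝ) ≥
      -Real.sqrt (((n : ℝ) - 1) / n) * Real.sqrt (∑ i, ∑ j, (a i j) ^ 2) *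
        ∑ i, ‖v i‖ ^ 2 := by
  have h := Matrix.abs_sum_sum_mul_inner_le_of_trace_eq_zero htrace v
  rw [Fintype.card_fin] at h
  rw [neg_mul, neg_mul, ge_iff_le, neg_le]
  exact (neg_le_abs _).trans h

/-- Vector-valued version of Lemma 4.1: for a real symmetric trace-free `n × n`
matrix `a` and vectors `v 1, …, v n` in a real inner product space,
`∑ i j, a i j * ⟪v i, v j⟫ ≥ -√((n-1)/n) * ‖a‖_F * ∑ i, ‖v i‖²`. -/
theorem stmt_1 (n : ℕ) (hn : 1 ≤ n) (V : Type*) [NormedAddCommGroup V]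
    [InnerProductSpace ℝ V] (a : Matrix (Fin n) (Fin n) ℝ)
    (hsymm : ∀ i j, a i j = a j i) (htrace : ∑ i, a i i = 0) (v : Fin n → V) :
    ∑ i, ∑ j, a i j * (inner ℝ (v i) (v j) : ℝ) ≥
      -Real.sqrt (((n : ℝ) - 1) / n) * Real.sqrt (∑ i, ∑ j, (a i j) ^ 2) *
        ∑ i, ‖v i‖ ^ 2 :=
  stmt_1_general n V a htrace v
end

section
/- Let n ≥ 1 and 1 ≤ p ≤ n. Let λ(1) ≤ λ(2) ≤ … ≤ λ(n) be a nondecreasing sequence of real numbers and let α be a totally antisymmetric map on p-tuples of indices from {1,…,n}. Then ∑_{i₁,…,i_p=1}^{n} λ(i₁)·α(i₁,…,i_p)² ≤ (1/p)·|α|²·∑_{j=n−p+1}^{n} λ(j), i.e. the weighted sum is bounded by (1/p) times |α|² times the sum of the p largest values of λ. -/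
section aux

variable {n p : ℕ}

lemma aux_sq (α : (Fin p → Fin n) → ℝ)
    (hanti : ∀ (I : Fin p → Fin n) (k l : Fin p), k ≠ l →
      α (I ∘ Equiv.swap k l) = -α I) (I : Fin p → Fin n) (k l : Fin p) :
    α (I ∘ Equiv.swap k l) ^ 2 = α I ^ 2 := by
  rcases eq_or_ne k l with rfl | h
  · simp
  · rw [hanti I k l h]; ring

lemma aux_zero (α : (Fin p → Fin n) → ℝ)
    (hanti : ∀ (I : Fin p → Fin n) (k l : Fin p), k ≠ l →
      α (I ∘ Equiv.swap k l) = -α I) (I : Fin p → Fin n)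
    (hI : ¬ Function.Injective I) : α I = 0 := by
  rw [Function.not_injective_iff] at hI
  obtain ⟨k, l, hkl, hne⟩ := hI
  have h1 : I ∘ Equiv.swap k l = I := by
    funext x
    rcases eq_or_ne x k with rfl | hxk
    · simp [Equiv.swap_apply_left, hkl]
    rcases eq_or_ne x l with rfl | hxl
    · simp [Equiv.swap_apply_right, hkl]
    · simp [Equiv.swap_apply_of_ne_of_ne hxk hxl]
  have := hanti I k l hne
  rw [h1] at this
  linarith

/-- sum over any `p`-element subset is at most the sum over the top `p` indices. -/
lemma aux_top (hp : 1 ≤ p) (hpn : p ≤ n) (lam : Fin n → ℝ) (hlam : Monotone lam)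
    (S : Finset (Fin n)) (hS : S.card = p) :
    ∑ j ∈ S, lam j ≤ ∑ j ∈ Finset.univ.filter (fun j : Fin n => n - p ≤ (j : ℕ)), lam j := by
  have hnp : n - p < n := by omega
  set m : Fin n := ⟨n - p, hnp⟩ with hm
  set F : Finset (Fin n) := Finset.univ.filter (fun j : Fin n => n - p ≤ (j : ℕ)) with hF
  have hFIci : F = Finset.Ici m := by
    ext j
    simp [hF, Finset.mem_Ici, Fin.le_def, hm]
  have hFcard : F.card = p := by
    rw [hFIci, Fin.card_Ici]
    simp [hm]; omega
  have hsplitS : ∑ j ∈ S ∩ F, lam j + ∑ j ∈ S \ F, lam j = ∑ j ∈ S, lam j :=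
    Finset.sum_inter_add_sum_sdiff S F lam
  have hsplitF : ∑ j ∈ F ∩ S, lam j + ∑ j ∈ F \ S, lam j = ∑ j ∈ F, lam j :=
    Finset.sum_inter_add_sum_sdiff F S lam
  have hcard : (S \ F).card = (F \ S).card := by
    have h1 := Finset.card_sdiff_add_card_inter S F
    have h2 := Finset.card_sdiff_add_card_inter F S
    rw [Finset.inter_comm] at h2
    omega
  have hub : ∑ j ∈ S \ F, lam j ≤ (S \ F).card • lam m := by
    apply Finset.sum_le_card_nsmul
    intro j hj
    rw [Finset.mem_sdiff, hF, Finset.mem_filter] at hj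
    apply hlam
    show (j : ℕ) ≤ n - p
    simp at hj
    omega
  have hlb : (F \ S).card • lam m ≤ ∑ j ∈ F \ S, lam j := by
    apply Finset.card_nsmul_le_sum
    intro j hj
    rw [Finset.mem_sdiff, hF, Finset.mem_filter] at hj
    apply hlam
    show n - p ≤ (j : ℕ)
    exact hj.1.2
  have hinter : ∑ j ∈ S ∩ F, lam j = ∑ j ∈ F ∩ S, lam j := by rw [Finset.inter_comm]
  rw [hcard] at hub
  linarith

end aux

/-- The eigenvalue estimate in the proof of Proposition 3.2: for a nondecreasing
sequence `λ 1 ≤ … ≤ λ n` and a totally antisymmetric map `α` on `p`-tuples of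
indices from `{1, …, n}`,
`∑_{i₁,…,i_p} λ(i₁) α(i₁,…,i_p)² ≤ (1/p) |α|² ∑_{j=n-p+1}^{n} λ(j)`. -/
theorem stmt_3 (n p : ℕ) (hn : 1 ≤ n) (hp : 1 ≤ p) (hpn : p ≤ n)
    (lam : Fin n → ℝ) (hlam : Monotone lam)
    (α : (Fin p → Fin n) → ℝ)
    (hanti : ∀ (I : Fin p → Fin n) (k l : Fin p), k ≠ l →
      α (I ∘ Equiv.swap k l) = -α I) :
    ∑ I : Fin p → Fin n, lam (I ⟨0, hp⟩) * (α I) ^ 2 ≤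
      (1 / (p : ℝ)) * (∑ I : Fin p → Fin n, (α I) ^ 2) *
        ∑ j ∈ Finset.univ.filter (fun j : Fin n => n - p ≤ (j : ℕ)), lam j := by
  set k0 : Fin p := ⟨0, hp⟩ with hk0
  set T : ℝ := ∑ j ∈ Finset.univ.filter (fun j : Fin n => n - p ≤ (j : ℕ)), lam j with hT
  set L : ℝ := ∑ I : Fin p → Fin n, lam (I k0) * (α I) ^ 2 with hL
  -- step 1 : for each coordinate k, the sum with weight lam (I k) equals L
  have hcoord : ∀ k : Fin p,
      ∑ I : Fin p → Fin n, lam (I k) * (α I) ^ 2 = L := by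
    intro k
    rw [hL]
    apply Fintype.sum_bijective (fun I : Fin p → Fin n => I ∘ Equiv.swap k0 k)
      ((Equiv.arrowCongr (Equiv.swap k0 k) (Equiv.refl (Fin n))).symm.bijective)
    intro I
    simp only [Function.comp_apply, Equiv.swap_apply_left]
    rw [aux_sq α hanti I k0 k]
  -- step 2 : p • L = ∑_I (∑_k lam (I k)) * α I ^ 2
  have hkey : (p : ℝ) * L = ∑ I : Fin p → Fin n, (∑ k : Fin p, lam (I k)) * (α I) ^ 2 := by
    calc (p : ℝ) * L = ∑ _k : Fin p, L := by
          rw [Finset.sum_const, Finset.card_univ, Fintype.card_fin, nsmul_eq_mul]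
      _ = ∑ k : Fin p, ∑ I : Fin p → Fin n, lam (I k) * (α I) ^ 2 := by
          exact Finset.sum_congr rfl fun k _ => (hcoord k).symm
      _ = ∑ I : Fin p → Fin n, ∑ k : Fin p, lam (I k) * (α I) ^ 2 := Finset.sum_comm
      _ = ∑ I : Fin p → Fin n, (∑ k : Fin p, lam (I k)) * (α I) ^ 2 := by
          exact Finset.sum_congr rfl fun I _ => (Finset.sum_mul _ _ _).symm
  -- step 3 : termwise bound
  have hbound : ∀ I : Fin p → Fin n,
      (∑ k : Fin p, lam (I k)) * (α I) ^ 2 ≤ T * (α I) ^ 2 := by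
    intro I
    by_cases hI : Function.Injective I
    · apply mul_le_mul_of_nonneg_right _ (sq_nonneg _)
      have himg : ∑ k : Fin p, lam (I k) = ∑ j ∈ Finset.univ.image I, lam j := by
        rw [Finset.sum_image (fun a _ b _ h => hI h)]
      rw [himg]
      apply aux_top hp hpn lam hlam
      rw [Finset.card_image_of_injective _ hI, Finset.card_univ, Fintype.card_fin]
    · rw [aux_zero α hanti I hI]
      simp
  have hmain : (p : ℝ) * L ≤ T * ∑ I : Fin p → Fin n, (α I) ^ 2 := by
    rw [hkey, Finset.mul_sum]
    exact Finset.sum_le_sum fun I _ => hbound I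
  have hppos : (0 : ℝ) < (p : ℝ) := by exact_mod_cast hp
  calc L = (1 / (p : ℝ)) * ((p : ℝ) * L) := by field_simp
    _ ≤ (1 / (p : ℝ)) * (T * ∑ I : Fin p → Fin n, (α I) ^ 2) := by
        apply mul_le_mul_of_nonneg_left hmain (by positivity)
    _ = (1 / (p : ℝ)) * (∑ I : Fin p → Fin n, (α I) ^ 2) * T := by ring
end

section
/- Let n ≥ 3 and 2 ≤ p ≤ n. Let Ric be a real symmetric n×n matrix with R := trace(Ric), let Riem be the associated locally conformally flat curvature tensor, and let α be a totally antisymmetric map on p-tuples of indices from {1,…,n}. Then the Weitzenböck curvature term satisfies the identity F(α) = ((n−2p)/(n−2))·∑_{i,j,i₂,…,i_p=1}^{n} Ric_{ij} α(i,i₂,…,i_p) α(j,i₂,…,i_p) + ((p−1)·R/((n−1)(n−2)))·|α|². -/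
/-- The curvature tensor of a locally conformally flat manifold, expressed
pointwise in terms of its Ricci tensor `Ric` and scalar curvature
`R = trace Ric` (formula (2.2) of the paper). -/
noncomputable def lcfRiem (n : ℕ) (Ric : Matrix (Fin n) (Fin n) ℝ)
    (i j k l : Fin n) : ℝ :=
  (1 / ((n : ℝ) - 2)) *
      (Ric i k * (if j = l then (1 : ℝ) else 0) -
        Ric i l * (if j = k then (1 : ℝ) else 0) +
        Ric j l * (if i = k then (1 : ℝ) else 0) -
        Ric j k * (if i = l then (1 : ℝ) else 0)) -
    ((∑ m, Ric m m) / (((n : ℝ) - 1) * ((n : ℝ) - 2))) *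
      ((if i = k then (1 : ℝ) else 0) * (if j = l then (1 : ℝ) else 0) -
        (if i = l then (1 : ℝ) else 0) * (if j = k then (1 : ℝ) else 0))

theorem aux_main (n p : ℕ) (hn : 3 ≤ n)
    (Ric : Matrix (Fin n) (Fin n) ℝ)
    (α : (Fin p → Fin n) → ℝ)
    (hanti : ∀ (I : Fin p → Fin n) (k l : Fin p), k ≠ l →
      α (I ∘ Equiv.swap k l) = -α I)
    (i0 i1 : Fin p) (h01 : i0 ≠ i1) :
    (∑ I : Fin p → Fin n, ∑ j : Fin n,
        Ric (I i0) j * α I * α (Function.update I i0 j)) -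
      (((p : ℝ) - 1) / 2) *
        ∑ I : Fin p → Fin n, ∑ k : Fin n, ∑ l : Fin n,
          lcfRiem n Ric (I i0) (I i1) k l * α I *
            α (Function.update (Function.update I i0 k) i1 l) =
    (((n : ℝ) - 2 * (p : ℝ)) / ((n : ℝ) - 2)) *
        (∑ I : Fin p → Fin n, ∑ j : Fin n,
          Ric (I i0) j * α I * α (Function.update I i0 j)) +
      (((p : ℝ) - 1) * (∑ m, Ric m m) / (((n : ℝ) - 1) * ((n : ℝ) - 2))) *
        ∑ I : Fin p → Fin n, (α I) ^ 2 := by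
  have h10 : i1 ≠ i0 := h01.symm
  -- antisymmetry in the two updated slots
  have hswap : ∀ (I : Fin p → Fin n) (k l : Fin n),
      α (Function.update (Function.update I i0 k) i1 l)
        = -α (Function.update (Function.update I i0 l) i1 k) := by
    intro I k l
    have hc : (Function.update (Function.update I i0 l) i1 k) ∘ Equiv.swap i0 i1
        = Function.update (Function.update I i0 k) i1 l := by
      funext m
      simp only [Function.comp_apply]
      rcases eq_or_ne m i0 with rfl | hm0
      · rw [Equiv.swap_apply_left, Function.update_self,
          Function.update_of_ne h01, Function.update_self]
      rcases eq_or_ne m i1 with rfl | hm1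
      · rw [Equiv.swap_apply_right, Function.update_of_ne h01,
          Function.update_self, Function.update_self]
      · rw [Equiv.swap_apply_of_ne_of_ne hm0 hm1, Function.update_of_ne hm1,
          Function.update_of_ne hm0, Function.update_of_ne hm1,
          Function.update_of_ne hm0]
    have := hanti (Function.update (Function.update I i0 l) i1 k) i0 i1 h01
    rw [hc] at this
    linarith [this]
  -- reindexing: sum over the i1-slot equals sum over the i0-slot
  have hA' : (∑ I : Fin p → Fin n, ∑ l : Fin n,
        Ric (I i1) l * α I * α (Function.update I i1 l))
      = ∑ I : Fin p → Fin n, ∑ j : Fin n,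
        Ric (I i0) j * α I * α (Function.update I i0 j) := by
    apply Fintype.sum_equiv ((Equiv.swap i0 i1).arrowCongr (Equiv.refl (Fin n)))
    intro I
    have hI : ((Equiv.swap i0 i1).arrowCongr (Equiv.refl (Fin n))) I
        = I ∘ Equiv.swap i0 i1 := by
      funext m; simp [Equiv.arrowCongr, Function.comp]
    rw [hI]
    have hαI : α (I ∘ Equiv.swap i0 i1) = -α I := hanti I i0 i1 h01
    have hcomp : ∀ l : Fin n,
        Function.update (I ∘ Equiv.swap i0 i1) i0 l
          = (Function.update I i1 l) ∘ Equiv.swap i0 i1 := by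
      intro l; funext m
      simp only [Function.comp_apply]
      rcases eq_or_ne m i0 with rfl | hm0
      · rw [Function.update_self, Equiv.swap_apply_left, Function.update_self]
      rcases eq_or_ne m i1 with rfl | hm1
      · rw [Function.update_of_ne h10, Function.comp_apply,
          Equiv.swap_apply_right, Function.update_of_ne h01]
      · rw [Function.update_of_ne hm0, Function.comp_apply,
          Equiv.swap_apply_of_ne_of_ne hm0 hm1,
          Function.update_of_ne hm1]
    have hcomp0 : (I ∘ Equiv.swap i0 i1) i0 = I i1 := by
      simp [Function.comp, Equiv.swap_apply_left]
    refine Finset.sum_congr rfl ?_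
    intro l _
    rw [hcomp0, hcomp l, hanti (Function.update I i1 l) i0 i1 h01, hαI]
    ring
  -- pointwise update simplifications
  have hupd1 : ∀ (I : Fin p → Fin n) (k : Fin n),
      Function.update (Function.update I i0 k) i1 (I i1) = Function.update I i0 k := by
    intro I k
    conv_lhs => rw [show I i1 = (Function.update I i0 k) i1 from
      (Function.update_of_ne h10 k I).symm]
    exact Function.update_eq_self i1 _
  have h2 : ∀ (I : Fin p → Fin n) (l : Fin n),
      α (Function.update (Function.update I i0 (I i1)) i1 l)
        = -α (Function.update I i0 l) := by
    intro I l; rw [hswap, hupd1]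
  have h3 : ∀ (I : Fin p → Fin n) (k : Fin n),
      α (Function.update (Function.update I i0 k) i1 (I i0))
        = -α (Function.update I i1 k) := by
    intro I k; rw [hswap, Function.update_eq_self]
  have h4 : ∀ (I : Fin p → Fin n),
      α (Function.update (Function.update I i0 (I i1)) i1 (I i0)) = -α I := by
    intro I; rw [hswap, Function.update_eq_self, Function.update_eq_self]
  -- the inner double sum, for each fixed I
  have hinner : ∀ I : Fin p → Fin n,
      (∑ k : Fin n, ∑ l : Fin n, lcfRiem n Ric (I i0) (I i1) k l * α I *
          α (Function.update (Function.update I i0 k) i1 l))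
        = (2 / ((n : ℝ) - 2)) * (∑ k : Fin n, Ric (I i0) k * α I * α (Function.update I i0 k))
          + (2 / ((n : ℝ) - 2)) * (∑ l : Fin n, Ric (I i1) l * α I * α (Function.update I i1 l))
          - (2 * (∑ m, Ric m m) / (((n : ℝ) - 1) * ((n : ℝ) - 2))) * α I ^ 2 := by
    intro I
    have expand : ∀ k l : Fin n,
        lcfRiem n Ric (I i0) (I i1) k l * α I *
            α (Function.update (Function.update I i0 k) i1 l)
          = (1 / ((n : ℝ) - 2)) *
              (if I i1 = l then Ric (I i0) k * α I *
                α (Function.update (Function.update I i0 k) i1 l) else 0)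
            - (1 / ((n : ℝ) - 2)) *
              (if I i1 = k then Ric (I i0) l * α I *
                α (Function.update (Function.update I i0 k) i1 l) else 0)
            + (1 / ((n : ℝ) - 2)) *
              (if I i0 = k then Ric (I i1) l * α I *
                α (Function.update (Function.update I i0 k) i1 l) else 0)
            - (1 / ((n : ℝ) - 2)) *
              (if I i0 = l then Ric (I i1) k * α I *
                α (Function.update (Function.update I i0 k) i1 l) else 0)
            - ((∑ m, Ric m m) / (((n : ℝ) - 1) * ((n : ℝ) - 2))) *
              (if I i1 = l then (if I i0 = k then α I *
                α (Function.update (Function.update I i0 k) i1 l) else 0) else 0)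
            + ((∑ m, Ric m m) / (((n : ℝ) - 1) * ((n : ℝ) - 2))) *
              (if I i0 = l then (if I i1 = k then α I *
                α (Function.update (Function.update I i0 k) i1 l) else 0) else 0) := by
      intro k l
      unfold lcfRiem
      split_ifs <;> ring
    have E1 : (∑ k : Fin n, ∑ l : Fin n, (if I i1 = l then Ric (I i0) k * α I *
          α (Function.update (Function.update I i0 k) i1 l) else 0))
        = ∑ k : Fin n, Ric (I i0) k * α I * α (Function.update I i0 k) := by
      refine Finset.sum_congr rfl fun k _ => ?_
      rw [Finset.sum_ite_eq]
      simp only [Finset.mem_univ, if_true]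
      rw [hupd1]
    have E2 : (∑ k : Fin n, ∑ l : Fin n, (if I i1 = k then Ric (I i0) l * α I *
          α (Function.update (Function.update I i0 k) i1 l) else 0))
        = -∑ l : Fin n, Ric (I i0) l * α I * α (Function.update I i0 l) := by
      rw [Finset.sum_comm]
      have step : ∀ l : Fin n, (∑ k : Fin n, if I i1 = k then Ric (I i0) l * α I *
            α (Function.update (Function.update I i0 k) i1 l) else 0)
          = -(Ric (I i0) l * α I * α (Function.update I i0 l)) := by
        intro l
        rw [Finset.sum_ite_eq]
        simp only [Finset.mem_univ, if_true]
        rw [h2 I l]; ring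
      rw [Finset.sum_congr rfl fun l _ => step l, Finset.sum_neg_distrib]
    have E3 : (∑ k : Fin n, ∑ l : Fin n, (if I i0 = k then Ric (I i1) l * α I *
          α (Function.update (Function.update I i0 k) i1 l) else 0))
        = ∑ l : Fin n, Ric (I i1) l * α I * α (Function.update I i1 l) := by
      rw [Finset.sum_comm]
      refine Finset.sum_congr rfl fun l _ => ?_
      rw [Finset.sum_ite_eq]
      simp only [Finset.mem_univ, if_true]
      rw [Function.update_eq_self]
    have E4 : (∑ k : Fin n, ∑ l : Fin n, (if I i0 = l then Ric (I i1) k * α I *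
          α (Function.update (Function.update I i0 k) i1 l) else 0))
        = -∑ k : Fin n, Ric (I i1) k * α I * α (Function.update I i1 k) := by
      have step : ∀ k : Fin n, (∑ l : Fin n, if I i0 = l then Ric (I i1) k * α I *
            α (Function.update (Function.update I i0 k) i1 l) else 0)
          = -(Ric (I i1) k * α I * α (Function.update I i1 k)) := by
        intro k
        rw [Finset.sum_ite_eq]
        simp only [Finset.mem_univ, if_true]
        rw [h3 I k]; ring
      rw [Finset.sum_congr rfl fun k _ => step k, Finset.sum_neg_distrib]
    have E5 : (∑ k : Fin n, ∑ l : Fin n, (if I i1 = l then (if I i0 = k then α I *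
          α (Function.update (Function.update I i0 k) i1 l) else 0) else 0))
        = α I ^ 2 := by
      have step : ∀ k : Fin n, (∑ l : Fin n, if I i1 = l then (if I i0 = k then α I *
            α (Function.update (Function.update I i0 k) i1 l) else 0) else 0)
          = (if I i0 = k then α I * α (Function.update I i0 k) else 0) := by
        intro k
        rw [Finset.sum_ite_eq]
        simp only [Finset.mem_univ, if_true]
        rw [hupd1]
      rw [Finset.sum_congr rfl fun k _ => step k, Finset.sum_ite_eq]
      simp only [Finset.mem_univ, if_true]
      rw [Function.update_eq_self]
      ring
    have E6 : (∑ k : Fin n, ∑ l : Fin n, (if I i0 = l then (if I i1 = k then α I *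
          α (Function.update (Function.update I i0 k) i1 l) else 0) else 0))
        = -α I ^ 2 := by
      have step : ∀ k : Fin n, (∑ l : Fin n, if I i0 = l then (if I i1 = k then α I *
            α (Function.update (Function.update I i0 k) i1 l) else 0) else 0)
          = (if I i1 = k then α I *
              α (Function.update (Function.update I i0 k) i1 (I i0)) else 0) := by
        intro k
        rw [Finset.sum_ite_eq]
        simp only [Finset.mem_univ, if_true]
      rw [Finset.sum_congr rfl fun k _ => step k, Finset.sum_ite_eq]
      simp only [Finset.mem_univ, if_true]
      rw [h4 I]
      ring
    calc (∑ k : Fin n, ∑ l : Fin n, lcfRiem n Ric (I i0) (I i1) k l * α I *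
            α (Function.update (Function.update I i0 k) i1 l))
        = ∑ k : Fin n, ∑ l : Fin n,
            ((1 / ((n : ℝ) - 2)) *
              (if I i1 = l then Ric (I i0) k * α I *
                α (Function.update (Function.update I i0 k) i1 l) else 0)
            - (1 / ((n : ℝ) - 2)) *
              (if I i1 = k then Ric (I i0) l * α I *
                α (Function.update (Function.update I i0 k) i1 l) else 0)
            + (1 / ((n : ℝ) - 2)) *
              (if I i0 = k then Ric (I i1) l * α I *
                α (Function.update (Function.update I i0 k) i1 l) else 0)
            - (1 / ((n : ℝ) - 2)) *
              (if I i0 = l then Ric (I i1) k * α I *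
                α (Function.update (Function.update I i0 k) i1 l) else 0)
            - ((∑ m, Ric m m) / (((n : ℝ) - 1) * ((n : ℝ) - 2))) *
              (if I i1 = l then (if I i0 = k then α I *
                α (Function.update (Function.update I i0 k) i1 l) else 0) else 0)
            + ((∑ m, Ric m m) / (((n : ℝ) - 1) * ((n : ℝ) - 2))) *
              (if I i0 = l then (if I i1 = k then α I *
                α (Function.update (Function.update I i0 k) i1 l) else 0) else 0)) := by
          exact Finset.sum_congr rfl fun k _ => Finset.sum_congr rfl fun l _ => expand k l
      _ = (2 / ((n : ℝ) - 2)) * (∑ k : Fin n, Ric (I i0) k * α I * α (Function.update I i0 k))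
          + (2 / ((n : ℝ) - 2)) * (∑ l : Fin n, Ric (I i1) l * α I * α (Function.update I i1 l))
          - (2 * (∑ m, Ric m m) / (((n : ℝ) - 1) * ((n : ℝ) - 2))) * α I ^ 2 := by
          simp only [Finset.sum_add_distrib, Finset.sum_sub_distrib, ← Finset.mul_sum]
          rw [E1, E2, E3, E4, E5, E6]
          ring
  -- sum over I
  have hTT : (∑ I : Fin p → Fin n, ∑ k : Fin n, ∑ l : Fin n,
        lcfRiem n Ric (I i0) (I i1) k l * α I *
          α (Function.update (Function.update I i0 k) i1 l))
      = (4 / ((n : ℝ) - 2)) * (∑ I : Fin p → Fin n, ∑ j : Fin n,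
          Ric (I i0) j * α I * α (Function.update I i0 j))
        - (2 * (∑ m, Ric m m) / (((n : ℝ) - 1) * ((n : ℝ) - 2))) *
          ∑ I : Fin p → Fin n, (α I) ^ 2 := by
    rw [Finset.sum_congr rfl fun I (_ : I ∈ Finset.univ) => hinner I]
    simp only [Finset.sum_add_distrib, Finset.sum_sub_distrib, ← Finset.mul_sum]
    rw [hA']
    ring
  rw [hTT]
  have hn2 : ((n : ℝ) - 2) ≠ 0 := by
    have : (3 : ℝ) ≤ (n : ℝ) := by exact_mod_cast hn
    linarith
  have hn1 : ((n : ℝ) - 1) ≠ 0 := by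
    have : (3 : ℝ) ≤ (n : ℝ) := by exact_mod_cast hn
    linarith
  field_simp
  ring

/-- The curvature-term identity (4.4): for a totally antisymmetric `p`-form
`α` on a locally conformally flat manifold,
`F(α) = ((n-2p)/(n-2)) ∑ Ric_ij α(i,…) α(j,…) + ((p-1) R/((n-1)(n-2))) |α|²`,
where `F(α) = ∑ Ric_ij α(i,…) α(j,…)
  - ((p-1)/2) ∑ Riem(i,j,k,l) α(i,j,…) α(k,l,…)`. -/
theorem stmt_6 (n p : ℕ) (hn : 3 ≤ n) (hp : 2 ≤ p) (hpn : p ≤ n)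
    (Ric : Matrix (Fin n) (Fin n) ℝ) (hsymm : ∀ i j, Ric i j = Ric j i)
    (α : (Fin p → Fin n) → ℝ)
    (hanti : ∀ (I : Fin p → Fin n) (k l : Fin p), k ≠ l →
      α (I ∘ Equiv.swap k l) = -α I) :
    (∑ I : Fin p → Fin n, ∑ j : Fin n,
        Ric (I ⟨0, by omega⟩) j * α I * α (Function.update I ⟨0, by omega⟩ j)) -
      (((p : ℝ) - 1) / 2) *
        ∑ I : Fin p → Fin n, ∑ k : Fin n, ∑ l : Fin n,
          lcfRiem n Ric (I ⟨0, by omega⟩) (I ⟨1, by omega⟩) k l * α I *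
            α (Function.update (Function.update I ⟨0, by omega⟩ k) ⟨1, by omega⟩ l) =
    (((n : ℝ) - 2 * (p : ℝ)) / ((n : ℝ) - 2)) *
        (∑ I : Fin p → Fin n, ∑ j : Fin n,
          Ric (I ⟨0, by omega⟩) j * α I * α (Function.update I ⟨0, by omega⟩ j)) +
      (((p : ℝ) - 1) * (∑ m, Ric m m) / (((n : ℝ) - 1) * ((n : ℝ) - 2))) *
        ∑ I : Fin p → Fin n, (α I) ^ 2 := by
  exact aux_main n p hn Ric α hanti ⟨0, by omega⟩ ⟨1, by omega⟩ (by simp [Fin.ext_iff])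
end

section
/- Let n ≥ 1 and p ≥ 1. Let E be a real symmetric n×n matrix with vanishing trace and let α be a totally antisymmetric map on p-tuples of indices from {1,…,n}. Then |∑_{i,j,i₂,…,i_p=1}^{n} E_{ij} α(i,i₂,…,i_p) α(j,i₂,…,i_p)| ≤ √((n−1)/n) · ‖E‖_F · |α|². -/
/-!
Freeze the first slot of `α` at `i` to get vectors `vᵢ`, and let `G` be their Gram matrix.
Summing over the free slot, `tr G = n |α|²` and `⟨E, G⟩_F` is `n` times the contraction.
As `E` is traceless, `⟨E, G⟩_F = ⟨E, G - (tr G / n) • 1⟩_F`, and a Gram matrix satisfies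
`‖G‖_F ≤ tr G` (Cauchy–Schwarz entrywise), so
`‖G - (tr G / n) • 1‖_F² = ‖G‖_F² - (tr G)² / n ≤ (n - 1) / n · (tr G)²`.
Cauchy–Schwarz for `⟨E, ·⟩_F` concludes.
-/

open Finset Function Matrix

section Pairing

variable {ι : Type*} [Fintype ι]

theorem sq_sum_sum_mul_le (f g : ι → ι → ℝ) :
    (∑ i, ∑ j, f i j * g i j) ^ 2 ≤ (∑ i, ∑ j, f i j ^ 2) * ∑ i, ∑ j, g i j ^ 2 := by
  simpa only [← Fintype.sum_prod_type'] using
    sum_mul_sq_le_sq_mul_sq univ (fun q : ι × ι => f q.1 q.2) (fun q => g q.1 q.2)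

variable [DecidableEq ι]

theorem sum_sum_mul_sub_smul_one_of_trace_eq_zero (E G : Matrix ι ι ℝ) (hE : E.trace = 0)
    (c : ℝ) : ∑ i, ∑ j, E i j * (G - c • 1) i j = ∑ i, ∑ j, E i j * G i j := by
  have hdiag : ∑ i, ∑ j, E i j * (c • (1 : Matrix ι ι ℝ)) i j = c * E.trace := by
    simp [Matrix.one_apply, Matrix.trace, mul_sum, mul_comm]
  simp only [Matrix.sub_apply, mul_sub, sum_sub_distrib, hdiag, hE, mul_zero, sub_zero]

theorem sum_sum_sub_smul_one_sq (G : Matrix ι ι ℝ) (c : ℝ) :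
    ∑ i, ∑ j, (G - c • 1) i j ^ 2 =
      ∑ i, ∑ j, G i j ^ 2 - 2 * c * G.trace + Fintype.card ι * c ^ 2 := by
  have hentry : ∀ i j, (G - c • 1) i j ^ 2 =
      G i j ^ 2 - 2 * c * (if i = j then G i j else 0) + (if i = j then c ^ 2 else 0) := by
    intro i j
    by_cases h : i = j <;> simp [h]; ring
  simp only [hentry, sum_add_distrib, sum_sub_distrib]
  simp [← mul_sum, Matrix.trace]

theorem abs_sum_sum_mul_le_of_trace_eq_zero [Nonempty ι] (E G : Matrix ι ι ℝ)
    (hE : E.trace = 0) (hG : ∑ i, ∑ j, G i j ^ 2 ≤ G.trace ^ 2) (hG₀ : 0 ≤ G.trace) :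
    |∑ i, ∑ j, E i j * G i j| ≤
      √((Fintype.card ι - 1) / Fintype.card ι) * √(∑ i, ∑ j, E i j ^ 2) * G.trace := by
  set n : ℝ := (Fintype.card ι : ℝ)
  have hn : 0 < n := by simp [n, Fintype.card_pos]
  set D := G - (G.trace / n) • 1
  have hD : ∑ i, ∑ j, D i j ^ 2 ≤ (n - 1) / n * G.trace ^ 2 := by
    rw [sum_sum_sub_smul_one_sq]
    have hcross : 2 * (G.trace / n) * G.trace - n * (G.trace / n) ^ 2 = G.trace ^ 2 / n := by
      field_simp; ring
    have hrhs : (n - 1) / n * G.trace ^ 2 = G.trace ^ 2 - G.trace ^ 2 / n := by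
      field_simp
    linarith
  have hsq : (∑ i, ∑ j, E i j * G i j) ^ 2 ≤
      (∑ i, ∑ j, E i j ^ 2) * ((n - 1) / n * G.trace ^ 2) := by
    rw [← sum_sum_mul_sub_smul_one_of_trace_eq_zero E G hE (G.trace / n)]
    exact (sq_sum_sum_mul_le _ _).trans
      (mul_le_mul_of_nonneg_left hD (by positivity))
  calc |∑ i, ∑ j, E i j * G i j|
      ≤ √((∑ i, ∑ j, E i j ^ 2) * ((n - 1) / n * G.trace ^ 2)) := Real.abs_le_sqrt hsq
    _ = √((n - 1) / n) * √(∑ i, ∑ j, E i j ^ 2) * G.trace := by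
      rw [Real.sqrt_mul (by positivity), Real.sqrt_mul' _ (by positivity), Real.sqrt_sq hG₀]
      ring

end Pairing

section Gram

variable {ι F : Type*} [Fintype ι] [NormedAddCommGroup F] [InnerProductSpace ℝ F]

theorem trace_gram_nonneg (v : ι → F) : 0 ≤ (gram ℝ v).trace :=
  sum_nonneg fun _ _ => real_inner_self_nonneg

theorem sum_sum_sq_gram_le_trace_sq (v : ι → F) :
    ∑ i, ∑ j, gram ℝ v i j ^ 2 ≤ (gram ℝ v).trace ^ 2 :=
  calc ∑ i, ∑ j, gram ℝ v i j ^ 2 ≤ ∑ i, ∑ j, inner ℝ (v i) (v i) * inner ℝ (v j) (v j) :=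
        sum_le_sum fun i _ => sum_le_sum fun j _ => by
          simpa only [gram_apply, sq] using real_inner_mul_inner_self_le (v i) (v j)
    _ = (gram ℝ v).trace ^ 2 := by
        rw [sq, Matrix.trace, sum_mul_sum]
        rfl

end Gram

section Slot

variable {κ ι M : Type*} [DecidableEq κ] [Fintype κ] [Fintype ι] [AddCommMonoid M]

-- `(i, I) ↦ (I z, I[z ↦ i])` is an involution of `ι × (κ → ι)`.
theorem sum_sum_update (z : κ) (H : ι → (κ → ι) → M) :
    ∑ i, ∑ I, H i (update I z i) = Fintype.card ι • ∑ I, H (I z) I := by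
  have hinv : Involutive fun q : ι × (κ → ι) => (q.2 z, update q.2 z q.1) := by
    rintro ⟨i, I⟩
    simp
  calc ∑ i, ∑ I, H i (update I z i)
      = ∑ q : ι × (κ → ι), H q.1 (update q.2 z q.1) := (Fintype.sum_prod_type' _).symm
    _ = ∑ q : ι × (κ → ι), H (q.2 z) (update (update q.2 z q.1) z (q.2 z)) :=
        (Equiv.sum_comp hinv.toPerm fun q => H q.1 (update q.2 z q.1)).symm
    _ = Fintype.card ι • ∑ I, H (I z) I := by
        simp [Fintype.sum_prod_type]

noncomputable def sliceAt (α : (κ → ι) → ℝ) (z : κ) (i : ι) : EuclideanSpace ℝ (κ → ι) :=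
  WithLp.toLp 2 fun I => α (update I z i)

theorem gram_sliceAt_apply (α : (κ → ι) → ℝ) (z : κ) (i j : ι) :
    gram ℝ (sliceAt α z) i j = ∑ I, α (update I z i) * α (update I z j) := by
  simp [sliceAt, EuclideanSpace.inner_toLp_toLp, dotProduct, mul_comm]

theorem trace_gram_sliceAt (α : (κ → ι) → ℝ) (z : κ) :
    (gram ℝ (sliceAt α z)).trace = Fintype.card ι * ∑ I, α I ^ 2 := by
  simp only [Matrix.trace, Matrix.diag_apply, gram_sliceAt_apply, ← sq]
  rw [sum_sum_update z fun _ I => α I ^ 2, nsmul_eq_mul]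

theorem sum_sum_mul_gram_sliceAt (E : Matrix ι ι ℝ) (α : (κ → ι) → ℝ) (z : κ) :
    ∑ i, ∑ j, E i j * gram ℝ (sliceAt α z) i j =
      Fintype.card ι * ∑ I, ∑ j, E (I z) j * α I * α (update I z j) := by
  have := sum_sum_update z fun i I => ∑ j, E i j * α I * α (update I z j)
  simp only [update_idem, nsmul_eq_mul] at this
  rw [← this]
  simp only [gram_sliceAt_apply, mul_sum]
  refine sum_congr rfl fun i _ => ?_
  rw [sum_comm]
  refine sum_congr rfl fun I _ => sum_congr rfl fun j _ => ?_
  ring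

end Slot

theorem stmt_8_general (n p : ℕ) (hn : 1 ≤ n) (hp : 1 ≤ p)
    (E : Matrix (Fin n) (Fin n) ℝ)
    (htrace : ∑ i, E i i = 0)
    (α : (Fin p → Fin n) → ℝ) :
    |∑ I : Fin p → Fin n, ∑ j : Fin n,
        E (I ⟨0, hp⟩) j * α I * α (Function.update I ⟨0, hp⟩ j)| ≤
      Real.sqrt (((n : ℝ) - 1) / n) * Real.sqrt (∑ i, ∑ j, (E i j) ^ 2) *
        ∑ I : Fin p → Fin n, (α I) ^ 2 := by
  have : Nonempty (Fin n) := ⟨⟨0, hn⟩⟩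
  have hn₀ : (0 : ℝ) < n := by exact_mod_cast hn
  have key := abs_sum_sum_mul_le_of_trace_eq_zero E (gram ℝ (sliceAt α ⟨0, hp⟩)) htrace
    (sum_sum_sq_gram_le_trace_sq _) (trace_gram_nonneg _)
  rw [sum_sum_mul_gram_sliceAt, trace_gram_sliceAt, Fintype.card_fin, abs_mul,
    abs_of_pos hn₀, mul_left_comm] at key
  exact le_of_mul_le_mul_left key hn₀

/-- The pointwise bound on the traceless-Ricci contraction of a totally
antisymmetric `p`-form used in deriving (4.6):
`|∑ E_ij α(i,i₂,…,i_p) α(j,i₂,…,i_p)| ≤ √((n-1)/n) ‖E‖_F |α|²`. -/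
theorem stmt_8 (n p : ℕ) (hn : 1 ≤ n) (hp : 1 ≤ p)
    (E : Matrix (Fin n) (Fin n) ℝ) (hsymm : ∀ i j, E i j = E j i)
    (htrace : ∑ i, E i i = 0)
    (α : (Fin p → Fin n) → ℝ)
    (hanti : ∀ (I : Fin p → Fin n) (k l : Fin p), k ≠ l →
      α (I ∘ Equiv.swap k l) = -α I) :
    |∑ I : Fin p → Fin n, ∑ j : Fin n,
        E (I ⟨0, hp⟩) j * α I * α (Function.update I ⟨0, hp⟩ j)| ≤
      Real.sqrt (((n : ℝ) - 1) / n) * Real.sqrt (∑ i, ∑ j, (E i j) ^ 2) *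
        ∑ I : Fin p → Fin n, (α I) ^ 2 :=
  stmt_8_general n p hn hp E htrace α
end

section
/- Let n ≥ 3 and 1 ≤ p ≤ n. Let Ric be a real symmetric n×n matrix with R := trace(Ric), and let α be a totally antisymmetric map on p-tuples of indices from {1,…,n}. Then ((n−2p)/(n−2))·∑_{i,j,i₂,…,i_p=1}^{n} Ric_{ij} α(i,i₂,…,i_p) α(j,i₂,…,i_p) + ((p−1)/((n−1)(n−2)))·R·|α|² ≥ −( |n−2p|/(n−2) + ((p−1)√n)/((n−1)(n−2)) ) · ‖Ric‖_F · |α|². -/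
private lemma aux_cs (n : ℕ) (Ric : Matrix (Fin n) (Fin n) ℝ) (v : Fin n → ℝ) :
    |∑ x, ∑ j, Ric x j * v x * v j| ≤
      Real.sqrt (∑ i, ∑ j, (Ric i j) ^ 2) * ∑ x, (v x) ^ 2 := by
  have h := Finset.sum_mul_sq_le_sq_mul_sq Finset.univ
    (fun q : Fin n × Fin n => Ric q.1 q.2) (fun q : Fin n × Fin n => v q.1 * v q.2)
  have e1 : ∑ q : Fin n × Fin n, Ric q.1 q.2 * (v q.1 * v q.2)
      = ∑ x, ∑ j, Ric x j * v x * v j := by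
    rw [Fintype.sum_prod_type]; simp [mul_assoc]
  have e2 : ∑ q : Fin n × Fin n, (Ric q.1 q.2) ^ 2 = ∑ i, ∑ j, (Ric i j) ^ 2 :=
    Fintype.sum_prod_type _
  have e3 : ∑ q : Fin n × Fin n, (v q.1 * v q.2) ^ 2 = (∑ x, (v x) ^ 2) ^ 2 := by
    rw [Fintype.sum_prod_type, sq]
    simp_rw [mul_pow, ← Finset.mul_sum]
    rw [← Finset.sum_mul]
  rw [e1, e2, e3] at h
  have hN : (0:ℝ) ≤ ∑ x, (v x) ^ 2 := Finset.sum_nonneg fun _ _ => sq_nonneg _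
  have hC : (0:ℝ) ≤ ∑ i, ∑ j, (Ric i j) ^ 2 :=
    Finset.sum_nonneg fun _ _ => Finset.sum_nonneg fun _ _ => sq_nonneg _
  calc |∑ x, ∑ j, Ric x j * v x * v j|
      = Real.sqrt ((∑ x, ∑ j, Ric x j * v x * v j) ^ 2) := (Real.sqrt_sq_eq_abs _).symm
    _ ≤ Real.sqrt ((∑ i, ∑ j, (Ric i j) ^ 2) * (∑ x, (v x) ^ 2) ^ 2) := Real.sqrt_le_sqrt h
    _ = Real.sqrt (∑ i, ∑ j, (Ric i j) ^ 2) * ∑ x, (v x) ^ 2 := by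
        rw [Real.sqrt_mul hC, Real.sqrt_sq hN]


/-- The pointwise curvature estimate behind (4.10) in the proof of Theorem 4.2:
the Weitzenböck curvature term of a harmonic `p`-form on a locally
conformally flat manifold is bounded below by
`-(|n-2p|/(n-2) + (p-1)√n/((n-1)(n-2))) ‖Ric‖_F |α|²`. -/
theorem stmt_10 (n p : ℕ) (hn : 3 ≤ n) (hp : 1 ≤ p) (hpn : p ≤ n)
    (Ric : Matrix (Fin n) (Fin n) ℝ) (hsymm : ∀ i j, Ric i j = Ric j i)
    (α : (Fin p → Fin n) → ℝ)
    (hanti : ∀ (I : Fin p → Fin n) (k l : Fin p), k ≠ l →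
      α (I ∘ Equiv.swap k l) = -α I) :
    (((n : ℝ) - 2 * (p : ℝ)) / ((n : ℝ) - 2)) *
        (∑ I : Fin p → Fin n, ∑ j : Fin n,
          Ric (I ⟨0, hp⟩) j * α I * α (Function.update I ⟨0, hp⟩ j)) +
      (((p : ℝ) - 1) / (((n : ℝ) - 1) * ((n : ℝ) - 2))) * (∑ m, Ric m m) *
        ∑ I : Fin p → Fin n, (α I) ^ 2 ≥
    -(|(n : ℝ) - 2 * (p : ℝ)| / ((n : ℝ) - 2) +
        ((p : ℝ) - 1) * Real.sqrt n / (((n : ℝ) - 1) * ((n : ℝ) - 2))) *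
      Real.sqrt (∑ i, ∑ j, (Ric i j) ^ 2) *
      ∑ I : Fin p → Fin n, (α I) ^ 2 := by
  set i0 : Fin p := ⟨0, hp⟩ with hi0
  set C : ℝ := Real.sqrt (∑ i, ∑ j, (Ric i j) ^ 2) with hCdef
  set N : ℝ := ∑ I : Fin p → Fin n, (α I) ^ 2 with hNdef
  set S : ℝ := ∑ I : Fin p → Fin n, ∑ j : Fin n,
      Ric (I i0) j * α I * α (Function.update I i0 j) with hSdef
  set R : ℝ := ∑ m, Ric m m with hRdef
  have hC0 : 0 ≤ C := Real.sqrt_nonneg _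
  have hN0 : 0 ≤ N := Finset.sum_nonneg fun _ _ => sq_nonneg _
  -- the splitting equivalence
  set e := Equiv.funSplitAt i0 (Fin n) with he
  set v : ({ k : Fin p // k ≠ i0 } → Fin n) → Fin n → ℝ :=
    fun f x => α (e.symm (x, f)) with hv
  have hfst : ∀ (x : Fin n) (f : { k : Fin p // k ≠ i0 } → Fin n),
      (e.symm (x, f)) i0 = x := by
    intro x f
    simp [he, Equiv.funSplitAt, Equiv.piSplitAt]
  have hupd : ∀ (x j : Fin n) (f : { k : Fin p // k ≠ i0 } → Fin n),
      Function.update (e.symm (x, f)) i0 j = e.symm (j, f) := by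
    intro x j f
    funext k
    by_cases h : k = i0
    · subst h; simp [he, Equiv.funSplitAt, Equiv.piSplitAt]
    · simp [Function.update, h, he, Equiv.funSplitAt, Equiv.piSplitAt]
  have hreindex : ∀ F : (Fin p → Fin n) → ℝ,
      ∑ I : Fin p → Fin n, F I
        = ∑ f : { k : Fin p // k ≠ i0 } → Fin n, ∑ x : Fin n, F (e.symm (x, f)) := by
    intro F
    rw [← Equiv.sum_comp e.symm F, Fintype.sum_prod_type]
    exact Finset.sum_comm
  have hSalt : S = ∑ f : { k : Fin p // k ≠ i0 } → Fin n,
      ∑ x : Fin n, ∑ j : Fin n, Ric x j * v f x * v f j := by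
    rw [hSdef, hreindex (fun I => ∑ j : Fin n, Ric (I i0) j * α I * α (Function.update I i0 j))]
    refine Finset.sum_congr rfl fun f _ => Finset.sum_congr rfl fun x _ => ?_
    refine Finset.sum_congr rfl fun j _ => ?_
    rw [hfst, hupd]
  have hNalt : N = ∑ f : { k : Fin p // k ≠ i0 } → Fin n, ∑ x : Fin n, (v f x) ^ 2 := by
    rw [hNdef, hreindex (fun I => (α I) ^ 2)]
  -- |S| ≤ C * N
  have hS : |S| ≤ C * N := by
    rw [hSalt, hNalt, Finset.mul_sum]
    refine (Finset.abs_sum_le_sum_abs _ _).trans (Finset.sum_le_sum fun f _ => ?_)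
    exact aux_cs n Ric (v f)
  -- |R| ≤ √n * C
  have hR : |R| ≤ Real.sqrt n * C := by
    have h1 : R ^ 2 ≤ (n : ℝ) * ∑ m, (Ric m m) ^ 2 := by
      simpa using sq_sum_le_card_mul_sum_sq (s := (Finset.univ : Finset (Fin n)))
        (f := fun m => Ric m m)
    have h2 : ∑ m, (Ric m m) ^ 2 ≤ ∑ i, ∑ j, (Ric i j) ^ 2 :=
      Finset.sum_le_sum fun m _ =>
        Finset.single_le_sum (fun j _ => sq_nonneg (Ric m j)) (Finset.mem_univ m)
    have h3 : R ^ 2 ≤ (n : ℝ) * ∑ i, ∑ j, (Ric i j) ^ 2 :=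
      h1.trans (mul_le_mul_of_nonneg_left h2 (Nat.cast_nonneg n))
    calc |R| = Real.sqrt (R ^ 2) := (Real.sqrt_sq_eq_abs _).symm
      _ ≤ Real.sqrt ((n : ℝ) * ∑ i, ∑ j, (Ric i j) ^ 2) := Real.sqrt_le_sqrt h3
      _ = Real.sqrt n * C := Real.sqrt_mul (Nat.cast_nonneg n) _
  -- arithmetic
  have hn2 : (0:ℝ) < (n : ℝ) - 2 := by
    have : (3:ℝ) ≤ n := by exact_mod_cast hn
    linarith
  have hn1 : (0:ℝ) < (n : ℝ) - 1 := by linarith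
  have hp1 : (0:ℝ) ≤ (p : ℝ) - 1 := by
    have : (1:ℝ) ≤ p := by exact_mod_cast hp
    linarith
  have hsn : (0:ℝ) ≤ Real.sqrt n := Real.sqrt_nonneg _
  have hSabs := abs_le.mp hS
  have hRabs := abs_le.mp hR
  -- Term 1
  have T1 : (((n : ℝ) - 2 * p) / ((n : ℝ) - 2)) * S ≥
      -(|(n : ℝ) - 2 * p| / ((n : ℝ) - 2)) * (C * N) := by
    have habs : |(((n : ℝ) - 2 * p) / ((n : ℝ) - 2)) * S| ≤
        (|(n : ℝ) - 2 * p| / ((n : ℝ) - 2)) * (C * N) := by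
      rw [abs_mul, abs_div, abs_of_pos hn2]
      exact mul_le_mul_of_nonneg_left hS (by positivity)
    linarith [(abs_le.mp habs).1]
  -- Term 2
  have T2 : (((p : ℝ) - 1) / (((n : ℝ) - 1) * ((n : ℝ) - 2))) * R * N ≥
      -(((p : ℝ) - 1) * Real.sqrt n / (((n : ℝ) - 1) * ((n : ℝ) - 2))) * (C * N) := by
    have hc : (0:ℝ) ≤ ((p : ℝ) - 1) / (((n : ℝ) - 1) * ((n : ℝ) - 2)) := by positivity
    have h4 : (((p : ℝ) - 1) / (((n : ℝ) - 1) * ((n : ℝ) - 2))) * R ≥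
        -((((p : ℝ) - 1) / (((n : ℝ) - 1) * ((n : ℝ) - 2))) * (Real.sqrt n * C)) := by
      nlinarith [mul_le_mul_of_nonneg_left hR hc, hRabs.1, hRabs.2]
    have h5 := mul_le_mul_of_nonneg_right h4 hN0
    calc (((p : ℝ) - 1) / (((n : ℝ) - 1) * ((n : ℝ) - 2))) * R * N
        ≥ -((((p : ℝ) - 1) / (((n : ℝ) - 1) * ((n : ℝ) - 2))) * (Real.sqrt n * C)) * N := h5
      _ = -(((p : ℝ) - 1) * Real.sqrt n / (((n : ℝ) - 1) * ((n : ℝ) - 2))) * (C * N) := by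
          ring
  have hsplit : -(|(n : ℝ) - 2 * (p : ℝ)| / ((n : ℝ) - 2) +
        ((p : ℝ) - 1) * Real.sqrt n / (((n : ℝ) - 1) * ((n : ℝ) - 2))) * C * N
      = -(|(n : ℝ) - 2 * p| / ((n : ℝ) - 2)) * (C * N) +
        -(((p : ℝ) - 1) * Real.sqrt n / (((n : ℝ) - 1) * ((n : ℝ) - 2))) * (C * N) := by
    ring
  rw [ge_iff_le, hsplit]
  exact add_le_add T1 T2
end

section
/- Let n ≥ 3, p ≥ 1 with 2p < n, and set c := ((n−2)² − 4p(p−1))/(4p(n−1)(n−2)). Let Ric be a real symmetric n×n matrix with R := trace(Ric), assume R ≤ 0 and that the matrix Ric − c·R·Id is positive semidefinite, and let α be a totally antisymmetric map on p-tuples of indices from {1,…,n}. Then (p(n−2p)/(n−2))·∑_{i,j,i₂,…,i_p=1}^{n} Ric_{ij} α(i,i₂,…,i_p) α(j,i₂,…,i_p) + (p(p−1)/((n−1)(n−2)))·R·|α|² ≥ ((n−2)/(4(n−1)))·R·|α|². -/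
/-! The hypothesis says `Ric ≥ c R` as quadratic forms. Fixing the last `p - 1` indices of `α`
and applying this to the vector `i ↦ α (i, i₂, …, i_p)`, then summing, bounds the `Ric`-term from
below by `c R |α|²`. The left side is then at least `(A c + B) R |α|²`, where `A`, `B` are its two
coefficients, and `A c + B ≤ (n - 2)/(4(n - 1))` turns into the claim because `R |α|² ≤ 0`. -/

open Finset Matrix

theorem Matrix.PosSemidef.smul_dotProduct_self_le {ι : Type*} [Fintype ι] [DecidableEq ι]
    {A : Matrix ι ι ℝ} {a : ℝ} (hA : (A - a • 1).PosSemidef) (v : ι → ℝ) :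
    a * (v ⬝ᵥ v) ≤ v ⬝ᵥ (A *ᵥ v) := by
  have := hA.dotProduct_mulVec_nonneg v
  rw [star_trivial, sub_mulVec, smul_mulVec, one_mulVec, dotProduct_sub, dotProduct_smul,
    smul_eq_mul] at this
  linarith

theorem Equiv.funSplitAt_symm_apply_self {ι κ : Type*} [DecidableEq ι] (k : ι) (i : κ)
    (t : {j // j ≠ k} → κ) : (Equiv.funSplitAt k κ).symm (i, t) k = i := by
  simp [Equiv.funSplitAt, Equiv.piSplitAt]

theorem Equiv.update_funSplitAt_symm {ι κ : Type*} [DecidableEq ι] (k : ι) (i j : κ)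
    (t : {j // j ≠ k} → κ) :
    Function.update ((Equiv.funSplitAt k κ).symm (i, t)) k j =
      (Equiv.funSplitAt k κ).symm (j, t) := by
  funext l
  rcases eq_or_ne l k with rfl | hl
  · simp [Equiv.funSplitAt, Equiv.piSplitAt]
  · simp [hl, Equiv.funSplitAt, Equiv.piSplitAt]

theorem mul_sum_sq_le_sum_apply_update {ι κ : Type*} [Fintype ι] [DecidableEq ι]
    [Fintype κ] [DecidableEq κ] {A : Matrix κ κ ℝ} {a : ℝ}
    (hA : ∀ v : κ → ℝ, a * (v ⬝ᵥ v) ≤ v ⬝ᵥ (A *ᵥ v)) (k : ι) (α : (ι → κ) → ℝ) :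
    a * ∑ I, α I ^ 2 ≤ ∑ I, ∑ j, A (I k) j * α I * α (Function.update I k j) := by
  rw [← (Equiv.funSplitAt k κ).symm.sum_comp, ← (Equiv.funSplitAt k κ).symm.sum_comp,
    Fintype.sum_prod_type, Fintype.sum_prod_type, sum_comm, sum_comm (γ := κ), mul_sum]
  refine sum_le_sum fun t _ => ?_
  set v : κ → ℝ := fun i => α ((Equiv.funSplitAt k κ).symm (i, t))
  calc a * ∑ i, v i ^ 2 = a * (v ⬝ᵥ v) := by simp only [dotProduct, sq]
    _ ≤ v ⬝ᵥ (A *ᵥ v) := hA v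
    _ = _ := by
      simp only [v, dotProduct, mulVec, mul_sum, Equiv.funSplitAt_symm_apply_self,
        Equiv.update_funSplitAt_symm]
      exact sum_congr rfl fun i _ => sum_congr rfl fun j _ => by ring

-- `(n-2)/(4(n-1))` minus the left side equals `(p-1)((n-2)² - 4p(p-1)) / (2(n-1)(n-2)²)`.
theorem weitzenboeck_coeff_le {n p : ℝ} (hp : 1 ≤ p) (hpn : 2 * p + 1 ≤ n) :
    p * (n - 2 * p) / (n - 2) * (((n - 2) ^ 2 - 4 * p * (p - 1)) / (4 * p * (n - 1) * (n - 2))) +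
      p * (p - 1) / ((n - 1) * (n - 2)) ≤ (n - 2) / (4 * (n - 1)) := by
  have hn2 : 0 < n - 2 := by linarith
  have hn1 : 0 < n - 1 := by linarith
  rw [← sub_nonneg]
  have key : (n - 2) / (4 * (n - 1)) - (p * (n - 2 * p) / (n - 2) *
      (((n - 2) ^ 2 - 4 * p * (p - 1)) / (4 * p * (n - 1) * (n - 2))) +
        p * (p - 1) / ((n - 1) * (n - 2))) =
      (p - 1) * ((n - 2) ^ 2 - 4 * p * (p - 1)) / (2 * (n - 1) * (n - 2) ^ 2) := by
    field_simp
    ring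
  rw [key]
  apply div_nonneg _ (by positivity)
  apply mul_nonneg <;> nlinarith

theorem stmt_11_general (n p : ℕ) (hp : 1 ≤ p) (hpn : 2 * p < n)
    (Ric : Matrix (Fin n) (Fin n) ℝ)
    (hRneg : ∑ m, Ric m m ≤ 0)
    (hpsd : (Ric -
        (((((n : ℝ) - 2) ^ 2 - 4 * (p : ℝ) * ((p : ℝ) - 1)) /
            (4 * (p : ℝ) * ((n : ℝ) - 1) * ((n : ℝ) - 2))) * (∑ m, Ric m m)) •
          (1 : Matrix (Fin n) (Fin n) ℝ)).PosSemidef)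
    (α : (Fin p → Fin n) → ℝ) :
    ((p : ℝ) * ((n : ℝ) - 2 * (p : ℝ)) / ((n : ℝ) - 2)) *
        (∑ I : Fin p → Fin n, ∑ j : Fin n,
          Ric (I ⟨0, hp⟩) j * α I * α (Function.update I ⟨0, hp⟩ j)) +
      ((p : ℝ) * ((p : ℝ) - 1) / (((n : ℝ) - 1) * ((n : ℝ) - 2))) *
        (∑ m, Ric m m) * ∑ I : Fin p → Fin n, (α I) ^ 2 ≥
    (((n : ℝ) - 2) / (4 * ((n : ℝ) - 1))) * (∑ m, Ric m m) *
      ∑ I : Fin p → Fin n, (α I) ^ 2 := by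
  have hp' : (1 : ℝ) ≤ p := by exact_mod_cast hp
  have hpn' : 2 * (p : ℝ) + 1 ≤ n := by exact_mod_cast hpn
  have hS := mul_sum_sq_le_sum_apply_update hpsd.smul_dotProduct_self_le ⟨0, hp⟩ α
  have hcoef := weitzenboeck_coeff_le hp' hpn'
  have hA : 0 ≤ (p : ℝ) * (n - 2 * p) / (n - 2) := div_nonneg (by nlinarith) (by linarith)
  have hRN : (∑ m, Ric m m) * ∑ I, α I ^ 2 ≤ 0 :=
    mul_nonpos_of_nonpos_of_nonneg hRneg (sum_nonneg fun I _ => sq_nonneg (α I))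
  linarith [mul_le_mul_of_nonneg_left hS hA, mul_le_mul_of_nonpos_right hcoef hRN]

/-- The pointwise algebraic core of inequality (4.24) in Theorem 4.8: with
`c = ((n-2)² - 4p(p-1))/(4p(n-1)(n-2))`, if `R ≤ 0` and `Ric - c R Id` is
positive semidefinite, then the curvature term of the Weitzenböck formula
for a harmonic `p`-form is at least `((n-2)/(4(n-1))) R |α|²`. -/
theorem stmt_11 (n p : ℕ) (hn : 3 ≤ n) (hp : 1 ≤ p) (hpn : 2 * p < n)
    (Ric : Matrix (Fin n) (Fin n) ℝ) (hsymm : ∀ i j, Ric i j = Ric j i)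
    (hRneg : ∑ m, Ric m m ≤ 0)
    (hpsd : (Ric -
        (((((n : ℝ) - 2) ^ 2 - 4 * (p : ℝ) * ((p : ℝ) - 1)) /
            (4 * (p : ℝ) * ((n : ℝ) - 1) * ((n : ℝ) - 2))) * (∑ m, Ric m m)) •
          (1 : Matrix (Fin n) (Fin n) ℝ)).PosSemidef)
    (α : (Fin p → Fin n) → ℝ)
    (hanti : ∀ (I : Fin p → Fin n) (k l : Fin p), k ≠ l →
      α (I ∘ Equiv.swap k l) = -α I) :
    ((p : ℝ) * ((n : ℝ) - 2 * (p : ℝ)) / ((n : ℝ) - 2)) *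
        (∑ I : Fin p → Fin n, ∑ j : Fin n,
          Ric (I ⟨0, hp⟩) j * α I * α (Function.update I ⟨0, hp⟩ j)) +
      ((p : ℝ) * ((p : ℝ) - 1) / (((n : ℝ) - 1) * ((n : ℝ) - 2))) *
        (∑ m, Ric m m) * ∑ I : Fin p → Fin n, (α I) ^ 2 ≥
    (((n : ℝ) - 2) / (4 * ((n : ℝ) - 1))) * (∑ m, Ric m m) *
      ∑ I : Fin p → Fin n, (α I) ^ 2 :=
  stmt_11_general n p hp hpn Ric hRneg hpsd α
end
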